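/- (Deterministic walk in a random environment: positive probability of recurrence.) Identify the indices {1, 2, 3, 4} with the primitive directions g₁ = (1,0), g₂ = (0,1), g₃ = (−1,0), g₄ = (0,−1) of ℤ². For an environment λ : ℤ² → {1,2,3,4} and an initial direction index i₀ ∈ {1,2,3,4}, define the deterministic walk by p₀ = (0,0), d₀ = i₀, and for n ≥ 0: d_{n+1} = d_n + λ(p_n) mod 4 (with values taken in {1,2,3,4}) and p_{n+1} = p_n + g_{d_{n+1}}. Let π be a probability measure on {1,2,3,4} with π({4}) < 1, and let Π = π^{⊗ℤ²} be the product measure on environments. Then Π({λ : for every initial direction i₀ ∈ {1,2,3,4}, the walk in environment λ started at the origin with direction i₀ satisfies p_n = (0,0) for infinitely many n}) > 0. -/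

import Mathlib

open MeasureTheory Filter

/-- The four primitive directions `g₁ = E, g₂ = N, g₃ = W, g₄ = S` of `ℤ²`;
the direction index `i ∈ {1,2,3,4}` is encoded as `i - 1 : Fin 4`. -/
def dirG : Fin 4 → ℤ × ℤ := ![(1, 0), (0, 1), (-1, 0), (0, -1)]

/-- The deterministic walk in the environment `lam` started at the origin with
initial direction index `i0`: `p₀ = 0`, `d₀ = i0`, and `d_{n+1} = d_n + λ(p_n) mod 4`,
`p_{n+1} = p_n + g_{d_{n+1}}`.  A state `ω ∈ {1,2,3,4}` is encoded as
`ω - 1 : Fin 4`, so that the direction update reads `d_{n+1} = d_n + lam p_n + 1`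
in `Fin 4`.  (The states `1, 2, 3, 4`, i.e. `0, 1, 2, 3 : Fin 4`, correspond to
Left, Backward, Right, Forward.) -/
def walkDRE (lam : ℤ × ℤ → Fin 4) (i0 : Fin 4) : ℕ → (ℤ × ℤ) × Fin 4
  | 0 => ((0, 0), i0)
  | n + 1 =>
      let s := walkDRE lam i0 n
      let dnew : Fin 4 := s.2 + lam s.1 + 1
      (s.1 + dirG dnew, dnew)

/-!
A state `c ≠ 3` (anything but Forward) has positive probability. In the constant
environment `c` the walk from the origin closes up after four steps without leaving the
box `[-1, 1]²` (it turns around a unit square, or bounces back and forth), so on the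
cylinder event "`λ = c` on the box", of probability `π {c} ^ 9 > 0`, every walk from the
origin is periodic and hence returns to it infinitely often.
-/

def stepDRE (lam : ℤ × ℤ → Fin 4) (s : (ℤ × ℤ) × Fin 4) : (ℤ × ℤ) × Fin 4 :=
  (s.1 + dirG (s.2 + lam s.1 + 1), s.2 + lam s.1 + 1)

lemma walkDRE_eq_iterate (lam : ℤ × ℤ → Fin 4) (i0 : Fin 4) (n : ℕ) :
    walkDRE lam i0 n = (stepDRE lam)^[n] ((0, 0), i0) := by
  induction n with
  | zero => rfl
  | succ n ih => rw [Function.iterate_succ_apply', ← ih]; rfl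

lemma walkDRE_congr {lam lam' : ℤ × ℤ → Fin 4} {i0 : Fin 4} {n : ℕ}
    (h : ∀ k < n, lam (walkDRE lam' i0 k).1 = lam' (walkDRE lam' i0 k).1) :
    walkDRE lam i0 n = walkDRE lam' i0 n := by
  induction n with
  | zero => rfl
  | succ n ih =>
    simp only [walkDRE, ih fun k hk => h k (Nat.lt_succ_of_lt hk), h n (Nat.lt_succ_self n)]

lemma frequently_walkDRE_eq_origin {lam : ℤ × ℤ → Fin 4} {i0 : Fin 4} {m : ℕ} (hm : 0 < m)
    (h : Function.IsPeriodicPt (stepDRE lam) m ((0, 0), i0)) :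
    ∃ᶠ n in atTop, (walkDRE lam i0 n).1 = (0, 0) := by
  refine frequently_atTop.2 fun N => ⟨m * N, Nat.le_mul_of_pos_left N hm, ?_⟩
  rw [walkDRE_eq_iterate, (h.mul_const N).eq]

def unitBox : Finset (ℤ × ℤ) := ({-1, 0, 1} : Finset ℤ) ×ˢ {-1, 0, 1}

lemma walkDRE_const (c : Fin 4) (hc : c ≠ 3) (i0 : Fin 4) :
    (∀ k < 4, (walkDRE (fun _ => c) i0 k).1 ∈ unitBox) ∧
      walkDRE (fun _ => c) i0 4 = ((0, 0), i0) := by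
  revert c i0; decide

lemma isPeriodicPt_stepDRE_of_eqOn_unitBox {lam : ℤ × ℤ → Fin 4} {c : Fin 4} (hc : c ≠ 3)
    (hlam : ∀ γ ∈ unitBox, lam γ = c) (i0 : Fin 4) :
    Function.IsPeriodicPt (stepDRE lam) 4 ((0, 0), i0) := by
  obtain ⟨hbox, hret⟩ := walkDRE_const c hc i0
  rw [Function.IsPeriodicPt, Function.IsFixedPt, ← walkDRE_eq_iterate,
    walkDRE_congr fun k hk => hlam _ (hbox k hk), hret]

lemma exists_ne_measure_singleton_pos {α : Type*} [MeasurableSpace α] [Countable α]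
    [MeasurableSingletonClass α] {μ : Measure α} [IsProbabilityMeasure μ] {a : α}
    (ha : μ {a} < 1) : ∃ b ≠ a, 0 < μ {b} := by
  by_contra! h
  have hae : ∀ᵐ x ∂μ, x = a :=
    ae_iff_of_countable.2 fun x hx => by_contra fun hxa => hx (nonpos_iff_eq_zero.1 (h x hxa))
  exact ha.ne ((mem_ae_iff_prob_eq_one (measurableSet_singleton a)).1 hae)

theorem stmt12_general (π : Measure (Fin 4)) [IsProbabilityMeasure π]
    (hπ : π {3} < 1)
    (P : Measure ((ℤ × ℤ) → Fin 4))
    (hP : ∀ (s : Finset (ℤ × ℤ)) (f : ℤ × ℤ → Set (Fin 4)),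
      (∀ γ ∈ s, MeasurableSet (f γ)) →
      P {lam | ∀ γ ∈ s, lam γ ∈ f γ} = ∏ γ ∈ s, π (f γ)) :
    0 < P {lam | ∀ i0 : Fin 4,
      ∃ᶠ n in atTop, (walkDRE lam i0 n).1 = ((0 : ℤ), (0 : ℤ))} := by
  obtain ⟨c, hc, hπc⟩ := exists_ne_measure_singleton_pos hπ
  have hcyl : 0 < P {lam | ∀ γ ∈ unitBox, lam γ ∈ ({c} : Set (Fin 4))} := by
    rw [hP unitBox (fun _ => {c}) fun _ _ => measurableSet_singleton c, Finset.prod_const]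
    exact ENNReal.pow_pos hπc _
  refine hcyl.trans_le (measure_mono fun lam hlam i0 => ?_)
  exact frequently_walkDRE_eq_origin (by norm_num)
    (isPeriodicPt_stepDRE_of_eqOn_unitBox hc hlam i0)

/-- **deterministic walk in a random environment: positive probability
of recurrence.** Let `π` be a probability measure on the states `{1,2,3,4}` (encoded
as `Fin 4`) giving the `Forward` state (encoded as `3 : Fin 4`) probability `< 1`, and
let `P = π^{⊗ℤ²}` be the product measure on environments (characterized by its values
on cylinder sets). Then with positive probability the environment is such that, for
every initial direction, the walk returns to the origin infinitely often. -/
theorem stmt12 (π : Measure (Fin 4)) [IsProbabilityMeasure π]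
    (hπ : π {3} < 1)
    (P : Measure ((ℤ × ℤ) → Fin 4)) [IsProbabilityMeasure P]
    (hP : ∀ (s : Finset (ℤ × ℤ)) (f : ℤ × ℤ → Set (Fin 4)),
      (∀ γ ∈ s, MeasurableSet (f γ)) →
      P {lam | ∀ γ ∈ s, lam γ ∈ f γ} = ∏ γ ∈ s, π (f γ)) :
    0 < P {lam | ∀ i0 : Fin 4,
      ∃ᶠ n in atTop, (walkDRE lam i0 n).1 = ((0 : ℤ), (0 : ℤ))} :=
  stmt12_general π hπ P hP
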